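/- Let γ* be a minimizer of γ ↦ μ·γ − λ·V(γ, r) over γ ≥ 0, and for ν ∈ ℝ^S define q_i(ν) = λ·π(i) − Σ_{a∈anc(i), a≠i} ν_a·π(i)/π(a). A vector ν that is feasible for SimplerFluid is optimal for SimplerFluid if and only if the following three conditions hold: (C-1) Σ_{i∈S} ν_i = μ whenever γ* > 0; (C-2) for every state i with c(i) + V^f(γ*, i) > γ*, one has ν_i = q_i(ν); (C-3) for every state i with c(i) + V^f(γ*, i) < γ*, one has ν_i = 0. -/

import Mathlib

open scoped Classical
open Finset

/-- A finite tree-structured Markov chain: a finite state space partitioned into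
levels `0, …, L-1`, a root `r` at level `0`, a parent map `pa` (with `pa r = r` by
convention), and transition probabilities `p i ∈ (0,1]` of being reached from the
parent, with `p r = 1`. -/
structure TreeMC (S : Type*) [Fintype S] [DecidableEq S] where
  /-- the number of levels -/
  L : ℕ
  /-- the root -/
  r : S
  /-- the parent map (with `pa r = r` by convention) -/
  pa : S → S
  /-- the level of each state -/
  level : S → ℕ
  /-- the probability of being reached from the parent -/
  p : S → ℝ
  level_lt : ∀ i, level i < L
  level_r : level r = 0
  root_unique : ∀ i, level i = 0 → i = r
  pa_r : pa r = r
  level_pa : ∀ i, i ≠ r → level (pa i) + 1 = level i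
  p_pos : ∀ i, 0 < p i
  p_le_one : ∀ i, p i ≤ 1
  p_r : p r = 1

namespace TreeMC

variable {S : Type*} [Fintype S] [DecidableEq S] (M : TreeMC S)

/-- The ancestors of `i`: states on the path from the root to `i` (both included). -/
noncomputable def anc (i : S) : Finset S :=
  Finset.univ.filter fun a => ∃ n : ℕ, M.pa^[n] i = a

/-- The subtree of `i`: all states having `i` as an ancestor. -/
noncomputable def subt (i : S) : Finset S :=
  Finset.univ.filter fun k => i ∈ M.anc k

/-- The subtree of a set of states. -/
noncomputable def subF (X : Finset S) : Finset S :=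
  Finset.univ.filter fun k => ∃ i ∈ X, k ∈ M.subt i

/-- `π i`: the probability that a job passes through state `i`. -/
noncomputable def pi (i : S) : ℝ :=
  ∏ a ∈ M.anc i, M.p a

/-- The children of `i`. -/
noncomputable def child (i : S) : Finset S :=
  Finset.univ.filter fun k => k ≠ M.r ∧ M.pa k = i

/-- `T` is the top set of `X`: a subset of `X` whose subtree covers `X` and in which
no state lies in the subtree of a different state. -/
def IsTopSet (X T : Finset S) : Prop :=
  T ⊆ X ∧ X ⊆ M.subF T ∧ ∀ i ∈ T, ∀ k ∈ T, i ≠ k → k ∉ M.subt i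

/-- Expected future cost conditional on being in state `a`. -/
noncomputable def cf (c : S → ℝ) (a : S) : ℝ :=
  ∑ i ∈ M.subt a, c i * M.pi i / M.pi a

/-- `V` is the ski-rental value function:
`V γ i = min (γ, c i + Σ_{k ∈ child i} p k · V γ k)`. -/
def IsSkiValue (c : S → ℝ) (V : ℝ → S → ℝ) : Prop :=
  ∀ γ : ℝ, ∀ i : S, V γ i = min γ (c i + ∑ k ∈ M.child i, M.p k * V γ k)

/-- Expected future cost-to-go `V^f`. -/
noncomputable def Vf (V : ℝ → S → ℝ) (γ : ℝ) (i : S) : ℝ :=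
  ∑ k ∈ M.child i, M.p k * V γ k

/-- The candidate optimal state duals `β*(γ)`. -/
noncomputable def betaStar (c : S → ℝ) (V : ℝ → S → ℝ) (γ : ℝ) (i : S) : ℝ :=
  max 0 (c i + M.Vf V γ i - γ)

/-- Feasibility for the dual program `D*(γ)`. -/
def DualFeasible (c : S → ℝ) (γ : ℝ) (β : S → ℝ) : Prop :=
  (∀ i, 0 ≤ β i) ∧ ∀ a, M.cf c a ≤ γ + ∑ i ∈ M.subt a, β i * M.pi i / M.pi a

/-- Feasibility for the fluid LP (OriginalFluid). -/
def OrigFeasible (lam mu : ℝ) (q ν : S → ℝ) : Prop :=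
  (∀ i, 0 ≤ q i) ∧ (∀ i, 0 ≤ ν i) ∧ q M.r = lam ∧
    (∀ i, i ≠ M.r → q i = (q (M.pa i) - ν (M.pa i)) * M.p i) ∧
    (∀ i, ν i ≤ q i) ∧ ∑ i : S, ν i ≤ mu

/-- Feasibility for the fluid LP (SimplerFluid). -/
def SimpFeasible (lam mu : ℝ) (ν : S → ℝ) : Prop :=
  (∀ i, 0 ≤ ν i) ∧ (∀ i, ∑ a ∈ M.anc i, ν a * M.pi i / M.pi a ≤ lam * M.pi i) ∧
    ∑ i : S, ν i ≤ mu

end TreeMC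

/-!
The proof is LP duality. For `γ ≥ 0` the pair `(γ, β*(γ))` is feasible for the dual of
SimplerFluid, and since `c(i) + V^f(γ, i) - V(γ, i) = β*_i(γ)` its value is
`μγ + λ (c^f(r) - V(γ, r))`. The duality gap of a feasible `ν` splits into three nonnegative
terms whose vanishing is exactly (C-1)–(C-3), so it remains to exhibit one feasible `ν` satisfying
(C-1)–(C-3) at `γ*`. The one-sided derivatives of `γ ↦ V(γ, r)` at `γ*` are the purchase
probabilities of two ski-rental policies that are optimal at `γ*`; minimality of `γ*` puts `μ / λ`
between them (only the right derivative matters when `γ* = 0`), and the matching convex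
combination of the two flows serving every job at its first purchase state does the job.
-/

open Filter Topology

namespace TreeMC

variable {S : Type*} [Fintype S] [DecidableEq S] (M : TreeMC S)

section Tree

lemma mem_anc {a i : S} : a ∈ M.anc i ↔ ∃ n : ℕ, M.pa^[n] i = a := by
  simp [anc]

lemma self_mem_anc (i : S) : i ∈ M.anc i :=
  M.mem_anc.2 ⟨0, rfl⟩

lemma mem_anc_iff_eq_or_mem_anc_pa {a i : S} : a ∈ M.anc i ↔ a = i ∨ a ∈ M.anc (M.pa i) := by
  simp only [mem_anc]
  constructor
  · rintro ⟨_ | n, rfl⟩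
    · exact .inl rfl
    · exact .inr ⟨n, (Function.iterate_succ_apply _ _ _).symm⟩
  · rintro (rfl | ⟨n, rfl⟩)
    · exact ⟨0, rfl⟩
    · exact ⟨n + 1, Function.iterate_succ_apply _ _ _⟩

lemma anc_pa_subset (i : S) : M.anc (M.pa i) ⊆ M.anc i :=
  fun _ h => M.mem_anc_iff_eq_or_mem_anc_pa.2 (.inr h)

lemma anc_root : M.anc M.r = {M.r} := by
  ext a
  simp [mem_anc, Function.iterate_fixed M.pa_r, eq_comm]

lemma anc_trans {a b i : S} (hab : a ∈ M.anc b) (hbi : b ∈ M.anc i) : a ∈ M.anc i := by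
  obtain ⟨m, rfl⟩ := M.mem_anc.1 hab
  obtain ⟨n, rfl⟩ := M.mem_anc.1 hbi
  exact M.mem_anc.2 ⟨m + n, Function.iterate_add_apply _ _ _ _⟩

lemma mem_anc_or_mem_anc {a b j : S} (ha : a ∈ M.anc j) (hb : b ∈ M.anc j) :
    a ∈ M.anc b ∨ b ∈ M.anc a := by
  obtain ⟨m, rfl⟩ := M.mem_anc.1 ha
  obtain ⟨n, rfl⟩ := M.mem_anc.1 hb
  rcases le_total m n with h | h
  · exact .inr (M.mem_anc.2 ⟨n - m, by rw [← Function.iterate_add_apply, Nat.sub_add_cancel h]⟩)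
  · exact .inl (M.mem_anc.2 ⟨m - n, by rw [← Function.iterate_add_apply, Nat.sub_add_cancel h]⟩)

lemma level_pa_lt {i : S} (hi : i ≠ M.r) : M.level (M.pa i) < M.level i := by
  have := M.level_pa i hi
  omega

theorem path_induction {P : S → Prop} (root : P M.r)
    (step : ∀ i, i ≠ M.r → P (M.pa i) → P i) (i : S) : P i := by
  induction h : M.level i using Nat.strong_induction_on generalizing i with
  | _ n ih =>
    by_cases hi : i = M.r
    · exact hi ▸ root
    · exact step i hi (ih _ (h ▸ M.level_pa_lt hi) _ rfl)

lemma root_mem_anc (i : S) : M.r ∈ M.anc i := by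
  induction i using M.path_induction with
  | root => exact M.self_mem_anc _
  | step i _ ih => exact M.anc_pa_subset i ih

lemma eq_or_level_lt_of_mem_anc {a i : S} (h : a ∈ M.anc i) :
    a = i ∨ M.level a < M.level i := by
  induction i using M.path_induction with
  | root => simp_all [anc_root]
  | step i hi ih =>
    rcases M.mem_anc_iff_eq_or_mem_anc_pa.1 h with rfl | h
    · exact .inl rfl
    · have := M.level_pa_lt hi
      rcases ih h with rfl | h'
      · exact .inr this
      · exact .inr (h'.trans this)

lemma level_le_of_mem_anc {a i : S} (h : a ∈ M.anc i) : M.level a ≤ M.level i := by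
  rcases M.eq_or_level_lt_of_mem_anc h with rfl | h
  exacts [le_rfl, h.le]

lemma anc_erase_self {i : S} (hi : i ≠ M.r) : (M.anc i).erase i = M.anc (M.pa i) := by
  ext a
  rw [Finset.mem_erase, M.mem_anc_iff_eq_or_mem_anc_pa]
  constructor
  · rintro ⟨hne, rfl | h⟩
    exacts [absurd rfl hne, h]
  · intro h
    refine ⟨?_, .inr h⟩
    rintro rfl
    exact (M.level_le_of_mem_anc h).not_gt (M.level_pa_lt hi)

lemma mem_child {k i : S} : k ∈ M.child i ↔ k ≠ M.r ∧ M.pa k = i := by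
  simp [child]

lemma level_child {k i : S} (hk : k ∈ M.child i) : M.level k = M.level i + 1 := by
  obtain ⟨hr, rfl⟩ := M.mem_child.1 hk
  exact (M.level_pa k hr).symm

lemma anc_erase_child {k i : S} (hk : k ∈ M.child i) : (M.anc k).erase k = M.anc i := by
  obtain ⟨hr, rfl⟩ := M.mem_child.1 hk
  exact M.anc_erase_self hr

lemma mem_anc_of_mem_child {k i : S} (hk : k ∈ M.child i) : i ∈ M.anc k := by
  obtain ⟨-, rfl⟩ := M.mem_child.1 hk
  exact M.anc_pa_subset k (M.self_mem_anc _)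

lemma not_mem_anc_of_mem_child {k i : S} (hk : k ∈ M.child i) : k ∉ M.anc i := fun h => by
  have := M.level_le_of_mem_anc h
  have := M.level_child hk
  omega

theorem subtree_induction {P : S → Prop} (step : ∀ i, (∀ k ∈ M.child i, P k) → P i)
    (i : S) : P i := by
  induction h : M.L - M.level i using Nat.strong_induction_on generalizing i with
  | _ n ih =>
    refine step i fun k hk => ih _ ?_ k rfl
    have := M.level_child hk
    have := M.level_lt k
    omega

lemma mem_subt {j i : S} : j ∈ M.subt i ↔ i ∈ M.anc j := by
  simp [subt]

lemma subt_root : M.subt M.r = Finset.univ := by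
  ext j
  simp [mem_subt, M.root_mem_anc j]

lemma exists_child_mem_anc {i j : S} (hij : i ∈ M.anc j) (hne : j ≠ i) :
    ∃ k ∈ M.child i, k ∈ M.anc j := by
  induction j using M.path_induction with
  | root => simp_all [anc_root]
  | step j hj ih =>
    have hi : i ∈ M.anc (M.pa j) := M.anc_erase_self hj ▸ Finset.mem_erase.2 ⟨hne.symm, hij⟩
    by_cases hpa : M.pa j = i
    · exact ⟨j, M.mem_child.2 ⟨hj, hpa⟩, M.self_mem_anc j⟩
    · obtain ⟨k, hk, hkj⟩ := ih hi hpa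
      exact ⟨k, hk, M.anc_pa_subset j hkj⟩

lemma subt_eq_insert_biUnion (i : S) : M.subt i = insert i ((M.child i).biUnion M.subt) := by
  ext j
  simp only [Finset.mem_insert, Finset.mem_biUnion, mem_subt]
  constructor
  · intro hij
    by_cases hji : j = i
    · exact .inl hji
    · exact .inr (M.exists_child_mem_anc hij hji)
  · rintro (rfl | ⟨k, hk, hkj⟩)
    exacts [M.self_mem_anc j, M.anc_trans (M.mem_anc_of_mem_child hk) hkj]

lemma disjoint_subt_of_mem_child {i k k' : S} (hk : k ∈ M.child i) (hk' : k' ∈ M.child i)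
    (hne : k ≠ k') : Disjoint (M.subt k) (M.subt k') := by
  refine Finset.disjoint_left.2 fun j hj hj' => ?_
  have hlevel := (M.level_child hk).trans (M.level_child hk').symm
  rcases M.mem_anc_or_mem_anc (M.mem_subt.1 hj) (M.mem_subt.1 hj') with h | h
  · rcases M.eq_or_level_lt_of_mem_anc h with h | h
    exacts [hne h, by omega]
  · rcases M.eq_or_level_lt_of_mem_anc h with h | h
    exacts [hne h.symm, by omega]

lemma sum_subt (f : S → ℝ) (i : S) :
    ∑ j ∈ M.subt i, f j = f i + ∑ k ∈ M.child i, ∑ j ∈ M.subt k, f j := by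
  rw [M.subt_eq_insert_biUnion, Finset.sum_insert, Finset.sum_biUnion]
  · exact fun k hk k' hk' hne => M.disjoint_subt_of_mem_child hk hk' hne
  · simp only [Finset.mem_biUnion, mem_subt, not_exists, not_and]
    exact fun k hk => M.not_mem_anc_of_mem_child hk

end Tree

section Probability

lemma pi_pos (i : S) : 0 < M.pi i :=
  Finset.prod_pos fun a _ => M.p_pos a

lemma pi_root : M.pi M.r = 1 := by
  rw [pi, anc_root, Finset.prod_singleton, M.p_r]

lemma pi_of_ne_root {i : S} (hi : i ≠ M.r) : M.pi i = M.p i * M.pi (M.pa i) := by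
  rw [pi, pi, ← M.anc_erase_self hi, Finset.mul_prod_erase _ _ (M.self_mem_anc i)]

lemma pi_child {k i : S} (hk : k ∈ M.child i) : M.pi k = M.p k * M.pi i := by
  obtain ⟨hr, rfl⟩ := M.mem_child.1 hk
  exact M.pi_of_ne_root hr

lemma cf_eq_add_sum_child (f : S → ℝ) (i : S) :
    M.cf f i = f i + ∑ k ∈ M.child i, M.p k * M.cf f k := by
  have hi := (M.pi_pos i).ne'
  rw [cf, M.sum_subt, mul_div_cancel_right₀ _ hi]
  congr 1
  refine Finset.sum_congr rfl fun k hk => ?_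
  rw [cf, Finset.mul_sum]
  refine Finset.sum_congr rfl fun j _ => ?_
  rw [M.pi_child hk]
  field_simp [(M.p_pos k).ne']

end Probability

section Duality

/-- Mass of the jobs through `i` that have been served at `i` or at one of its ancestors. -/
noncomputable def served (ν : S → ℝ) (i : S) : ℝ :=
  ∑ a ∈ M.anc i, ν a * M.pi i / M.pi a

lemma served_eq_add_sum_erase (ν : S → ℝ) (i : S) :
    M.served ν i = ν i + ∑ a ∈ (M.anc i).erase i, ν a * M.pi i / M.pi a := by
  rw [served, ← Finset.add_sum_erase _ _ (M.self_mem_anc i),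
    mul_div_cancel_right₀ _ (M.pi_pos i).ne']

lemma served_root (ν : S → ℝ) : M.served ν M.r = ν M.r := by
  rw [served_eq_add_sum_erase, anc_root, Finset.erase_singleton, Finset.sum_empty, add_zero]

lemma served_of_ne_root (ν : S → ℝ) {i : S} (hi : i ≠ M.r) :
    M.served ν i = ν i + M.p i * M.served ν (M.pa i) := by
  rw [served_eq_add_sum_erase, M.anc_erase_self hi, served, Finset.mul_sum]
  congr 1
  refine Finset.sum_congr rfl fun a _ => ?_
  rw [M.pi_of_ne_root hi]
  ring

lemma sum_mul_cf_eq_sum_mul_served (ν f : S → ℝ) :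
    ∑ a, ν a * M.cf f a = ∑ j, f j * M.served ν j := by
  simp only [cf, served, Finset.mul_sum]
  refine Finset.sum_comm' (fun a j => ?_) |>.trans (Finset.sum_congr rfl fun j _ =>
    Finset.sum_congr rfl fun a _ => by ring)
  simp [mem_subt]

variable {c : S → ℝ} {V : ℝ → S → ℝ}

lemma V_eq_min (hV : M.IsSkiValue c V) (γ : ℝ) (i : S) :
    V γ i = min γ (c i + M.Vf V γ i) :=
  hV γ i

lemma cf_sub_V (hV : M.IsSkiValue c V) (γ : ℝ) (a : S) :
    M.cf c a - V γ a = M.cf (M.betaStar c V γ) a := by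
  induction a using M.subtree_induction with
  | step a ih =>
    rw [M.cf_eq_add_sum_child c, M.cf_eq_add_sum_child (M.betaStar c V γ), M.V_eq_min hV,
      betaStar, ← Finset.sum_congr rfl fun k hk => congrArg (M.p k * ·) (ih k hk)]
    simp only [Vf, mul_sub, Finset.sum_sub_distrib]
    rcases le_total γ (c a + ∑ k ∈ M.child a, M.p k * V γ k) with h | h
    · rw [min_eq_left h, max_eq_right (by linarith)]
      ring
    · rw [min_eq_right h, max_eq_left (by linarith)]
      ring

/-- The value of the dual of SimplerFluid at `(γ, β*(γ))`. -/
noncomputable def dualValue (c : S → ℝ) (V : ℝ → S → ℝ) (lam mu γ : ℝ) : ℝ :=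
  mu * γ + lam * ∑ j, M.betaStar c V γ j * M.pi j

lemma dualValue_sub_objective (hV : M.IsSkiValue c V) (lam mu γ : ℝ) (ν : S → ℝ) :
    M.dualValue c V lam mu γ - ∑ a, ν a * M.cf c a =
      γ * (mu - ∑ i, ν i) + ∑ j, M.betaStar c V γ j * (lam * M.pi j - M.served ν j) +
        ∑ a, ν a * (γ - V γ a) := by
  have hobj : ∑ a, ν a * M.cf c a =
      ∑ a, ν a * V γ a + ∑ j, M.betaStar c V γ j * M.served ν j := by
    rw [← M.sum_mul_cf_eq_sum_mul_served, ← Finset.sum_add_distrib]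
    exact Finset.sum_congr rfl fun a _ => by rw [← M.cf_sub_V hV]; ring
  rw [hobj, dualValue]
  simp only [mul_sub, Finset.sum_sub_distrib, Finset.mul_sum]
  ring_nf

def CompSlack (c : S → ℝ) (V : ℝ → S → ℝ) (lam mu γ : ℝ) (ν : S → ℝ) : Prop :=
  (0 < γ → ∑ i, ν i = mu) ∧
    (∀ i, γ < c i + M.Vf V γ i → M.served ν i = lam * M.pi i) ∧
    (∀ i, c i + M.Vf V γ i < γ → ν i = 0)

lemma betaStar_eq_zero_iff (γ : ℝ) (i : S) :
    M.betaStar c V γ i = 0 ↔ c i + M.Vf V γ i ≤ γ := by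
  rw [betaStar, max_eq_left_iff, sub_nonpos]

lemma sub_V_eq_zero_iff (hV : M.IsSkiValue c V) (γ : ℝ) (i : S) :
    γ - V γ i = 0 ↔ γ ≤ c i + M.Vf V γ i := by
  rw [sub_eq_zero, M.V_eq_min hV, eq_comm, min_eq_left_iff]

variable {lam mu γ : ℝ} {ν : S → ℝ}

lemma gap_terms_nonneg (hV : M.IsSkiValue c V) (hγ : 0 ≤ γ) (hν : M.SimpFeasible lam mu ν) :
    0 ≤ γ * (mu - ∑ i, ν i) ∧ (∀ j, 0 ≤ M.betaStar c V γ j * (lam * M.pi j - M.served ν j)) ∧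
      ∀ a, 0 ≤ ν a * (γ - V γ a) := by
  obtain ⟨hν0, hserved, hsum⟩ := hν
  refine ⟨mul_nonneg hγ (sub_nonneg.2 hsum), fun j => ?_, fun a => ?_⟩
  · exact mul_nonneg (le_max_left _ _) (sub_nonneg.2 (hserved j))
  · exact mul_nonneg (hν0 a) (sub_nonneg.2 ((M.V_eq_min hV γ a).trans_le (min_le_left _ _)))

theorem objective_le_dualValue (hV : M.IsSkiValue c V) (hγ : 0 ≤ γ)
    (hν : M.SimpFeasible lam mu ν) : ∑ a, ν a * M.cf c a ≤ M.dualValue c V lam mu γ := by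
  obtain ⟨h1, h2, h3⟩ := M.gap_terms_nonneg hV hγ hν
  rw [← sub_nonneg, M.dualValue_sub_objective hV]
  exact add_nonneg (add_nonneg h1 (Finset.sum_nonneg fun j _ => h2 j))
    (Finset.sum_nonneg fun a _ => h3 a)

theorem objective_eq_dualValue_iff (hV : M.IsSkiValue c V) (hγ : 0 ≤ γ)
    (hν : M.SimpFeasible lam mu ν) :
    ∑ a, ν a * M.cf c a = M.dualValue c V lam mu γ ↔ M.CompSlack c V lam mu γ ν := by
  obtain ⟨h1, h2, h3⟩ := M.gap_terms_nonneg hV hγ hν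
  rw [eq_comm, ← sub_eq_zero, M.dualValue_sub_objective hV,
    add_eq_zero_iff_of_nonneg (add_nonneg h1 (Finset.sum_nonneg fun j _ => h2 j))
      (Finset.sum_nonneg fun a _ => h3 a),
    add_eq_zero_iff_of_nonneg h1 (Finset.sum_nonneg fun j _ => h2 j),
    Finset.sum_eq_zero_iff_of_nonneg fun j _ => h2 j,
    Finset.sum_eq_zero_iff_of_nonneg fun a _ => h3 a, and_assoc, CompSlack]
  refine and_congr ?_ (and_congr (forall_congr' fun j => ?_) (forall_congr' fun a => ?_))
  · rw [mul_eq_zero, sub_eq_zero, eq_comm (a := mu)]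
    rcases hγ.eq_or_lt with rfl | hγ
    · simp
    · simp [hγ.ne', hγ]
  · rw [mul_eq_zero, sub_eq_zero, betaStar_eq_zero_iff, eq_comm, ← not_lt, or_iff_not_imp_left,
      not_not]
    simp
  · rw [mul_eq_zero, M.sub_V_eq_zero_iff hV, ← not_lt, or_iff_not_imp_right, not_not]
    simp

end Duality

section Slope

variable {c : S → ℝ} {V : ℝ → S → ℝ}

/-- `slope min c V γ i` and `slope max c V γ i` are the right and left derivatives of
`V · i` at `γ`. -/
noncomputable def slope (sel : ℝ → ℝ → ℝ) (c : S → ℝ) (V : ℝ → S → ℝ) (γ : ℝ) (i : S) : ℝ :=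
  if γ < c i + M.Vf V γ i then 1
  else if c i + M.Vf V γ i < γ then ∑ k ∈ (M.child i).attach, M.p k * slope sel c V γ k
  else sel 1 (∑ k ∈ (M.child i).attach, M.p k * slope sel c V γ k)
termination_by M.L - M.level i
decreasing_by
  all_goals
    have := M.level_child k.2
    have := M.level_lt k
    omega

lemma slope_eq (sel : ℝ → ℝ → ℝ) (γ : ℝ) (i : S) :
    M.slope sel c V γ i =
      if γ < c i + M.Vf V γ i then 1
      else if c i + M.Vf V γ i < γ then ∑ k ∈ M.child i, M.p k * M.slope sel c V γ k
      else sel 1 (∑ k ∈ M.child i, M.p k * M.slope sel c V γ k) := by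
  rw [slope, Finset.sum_attach (M.child i) fun k => M.p k * M.slope sel c V γ k]

theorem eventually_V_eq_add_mul_slope (hV : M.IsSkiValue c V) {γ : ℝ} {l : Filter ℝ}
    (hl : l ≤ 𝓝 γ) {sel : ℝ → ℝ → ℝ}
    (hsel : ∀ᶠ g in l, ∀ x y, min ((g - γ) * x) ((g - γ) * y) = (g - γ) * sel x y) (i : S) :
    ∀ᶠ g in l, V g i = V γ i + (g - γ) * M.slope sel c V γ i := by
  induction i using M.subtree_induction with
  | step i ih =>
    set A := ∑ k ∈ M.child i, M.p k * M.slope sel c V γ k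
    have hVf : ∀ᶠ g in l, M.Vf V g i = M.Vf V γ i + (g - γ) * A := by
      filter_upwards [(eventually_all_finset _).2 ih] with g hg
      simp only [Vf, A, Finset.mul_sum, ← Finset.sum_add_distrib]
      exact Finset.sum_congr rfl fun k hk => by rw [hg k hk]; ring
    have hcont : Tendsto (fun g => c i + (M.Vf V γ i + (g - γ) * A)) l
        (𝓝 (c i + M.Vf V γ i)) := by
      have : Continuous fun g : ℝ => c i + (M.Vf V γ i + (g - γ) * A) := by fun_prop
      simpa using (this.tendsto γ).mono_left hl
    have hid : Tendsto (fun g => g) l (𝓝 γ) := hl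
    rw [M.slope_eq]
    rcases lt_trichotomy γ (c i + M.Vf V γ i) with h | h | h
    · filter_upwards [hVf, hid.eventually_lt hcont h] with g hg hlt
      rw [if_pos h, M.V_eq_min hV g, M.V_eq_min hV γ, hg, min_eq_left h.le, min_eq_left hlt.le]
      ring
    · filter_upwards [hVf, hsel] with g hg hsel
      rw [if_neg h.not_lt, if_neg h.symm.not_lt, M.V_eq_min hV g, M.V_eq_min hV γ, hg,
        ← add_assoc, ← h, min_self, ← hsel, ← min_add_add_left, mul_one, add_sub_cancel]
    · filter_upwards [hVf, hcont.eventually_lt hid h] with g hg hlt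
      rw [if_neg (lt_asymm h), if_pos h, M.V_eq_min hV g, M.V_eq_min hV γ, hg, min_eq_right h.le,
        min_eq_right hlt.le]
      ring

lemma eventually_V_eq_right (hV : M.IsSkiValue c V) (γ : ℝ) (i : S) :
    ∀ᶠ g in 𝓝[>] γ, V g i = V γ i + (g - γ) * M.slope min c V γ i :=
  M.eventually_V_eq_add_mul_slope hV nhdsWithin_le_nhds
    (eventually_nhdsWithin_of_forall fun _ hg x y =>
      (mul_min_of_nonneg x y (sub_nonneg.2 (le_of_lt hg))).symm) i

lemma eventually_V_eq_left (hV : M.IsSkiValue c V) (γ : ℝ) (i : S) :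
    ∀ᶠ g in 𝓝[<] γ, V g i = V γ i + (g - γ) * M.slope max c V γ i :=
  M.eventually_V_eq_add_mul_slope hV nhdsWithin_le_nhds
    (eventually_nhdsWithin_of_forall fun _ hg _ _ =>
      ((antitone_mul_left (sub_nonpos.2 (le_of_lt hg))).map_max).symm) i

variable {lam mu γ : ℝ}

theorem lam_mul_slope_min_le (hV : M.IsSkiValue c V) (hγ : 0 ≤ γ)
    (hmin : IsMinOn (fun g => mu * g - lam * V g M.r) (Set.Ici 0) γ) :
    lam * M.slope min c V γ M.r ≤ mu := by
  obtain ⟨g, hg, hγg⟩ := ((M.eventually_V_eq_right hV γ M.r).and self_mem_nhdsWithin).exists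
  have hle := isMinOn_iff.1 hmin g (hγ.trans (le_of_lt hγg))
  simp only [hg] at hle
  refine le_of_mul_le_mul_left ?_ (sub_pos.2 hγg)
  linarith

theorem le_lam_mul_slope_max (hV : M.IsSkiValue c V) (hγ : 0 < γ)
    (hmin : IsMinOn (fun g => mu * g - lam * V g M.r) (Set.Ici 0) γ) :
    mu ≤ lam * M.slope max c V γ M.r := by
  obtain ⟨g, ⟨hg, hgγ⟩, hg0⟩ := (((M.eventually_V_eq_left hV γ M.r).and self_mem_nhdsWithin).and
    ((eventually_gt_nhds hγ).filter_mono nhdsWithin_le_nhds)).exists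
  have hle := isMinOn_iff.1 hmin g (le_of_lt hg0)
  simp only [hg] at hle
  refine le_of_mul_le_mul_left ?_ (sub_pos.2 (show g < γ from hgγ))
  linarith

end Slope

section FirstHit

variable (lam : ℝ) (B : Set S)

noncomputable def firstHitFlow (i : S) : ℝ :=
  if i ∈ B ∧ ∀ a ∈ (M.anc i).erase i, a ∉ B then lam * M.pi i else 0

lemma firstHitFlow_nonneg {lam : ℝ} (hlam : 0 ≤ lam) (i : S) : 0 ≤ M.firstHitFlow lam B i := by
  unfold firstHitFlow
  split_ifs
  exacts [mul_nonneg hlam (M.pi_pos i).le, le_rfl]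

lemma served_firstHitFlow (i : S) :
    M.served (M.firstHitFlow lam B) i = if ∃ a ∈ M.anc i, a ∈ B then lam * M.pi i else 0 := by
  induction i using M.path_induction with
  | root => simp [served_root, firstHitFlow, anc_root]
  | step i hi ih =>
    rw [M.served_of_ne_root _ hi, ih, firstHitFlow, M.anc_erase_self hi]
    by_cases h : ∃ a ∈ M.anc (M.pa i), a ∈ B
    · obtain ⟨a, ha, haB⟩ := h
      have hnot : ¬(i ∈ B ∧ ∀ a ∈ M.anc (M.pa i), a ∉ B) := fun hf => hf.2 a ha haB
      rw [if_neg hnot, if_pos ⟨a, ha, haB⟩, if_pos ⟨a, M.anc_pa_subset i ha, haB⟩, zero_add,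
        M.pi_of_ne_root hi]
      ring
    · have hfree : ∀ a ∈ M.anc (M.pa i), a ∉ B := fun a ha haB => h ⟨a, ha, haB⟩
      have h' : (∃ a ∈ M.anc i, a ∈ B) ↔ i ∈ B := by
        refine ⟨fun ⟨a, ha, haB⟩ => ?_, fun hiB => ⟨i, M.self_mem_anc i, hiB⟩⟩
        rcases M.mem_anc_iff_eq_or_mem_anc_pa.1 ha with rfl | ha
        exacts [haB, absurd haB (hfree a ha)]
      rw [if_neg h, mul_zero, add_zero]
      simp only [and_iff_left hfree, h']

lemma sum_subt_firstHitFlow {d : S → ℝ}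
    (hd : ∀ i, d i = if i ∈ B then 1 else ∑ k ∈ M.child i, M.p k * d k) (i : S)
    (hfree : ∀ a ∈ (M.anc i).erase i, a ∉ B) :
    ∑ j ∈ M.subt i, M.firstHitFlow lam B j = lam * M.pi i * d i := by
  induction i using M.subtree_induction with
  | step i ih =>
    rw [M.sum_subt, hd]
    by_cases hi : i ∈ B
    · have hzero : ∀ k ∈ M.child i, ∀ j ∈ M.subt k, M.firstHitFlow lam B j = 0 := by
        intro k hk j hj
        have hij : i ≠ j := by
          rintro rfl
          exact M.not_mem_anc_of_mem_child hk (M.mem_subt.1 hj)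
        rw [firstHitFlow, if_neg fun h => h.2 i (Finset.mem_erase.2
          ⟨hij, M.anc_trans (M.mem_anc_of_mem_child hk) (M.mem_subt.1 hj)⟩) hi]
      rw [if_pos hi, firstHitFlow, if_pos ⟨hi, hfree⟩,
        Finset.sum_eq_zero fun k hk => Finset.sum_eq_zero (hzero k hk)]
      ring
    · have hfree_child : ∀ k ∈ M.child i, ∀ a ∈ (M.anc k).erase k, a ∉ B := by
        intro k hk a ha
        rw [M.anc_erase_child hk] at ha
        by_cases hai : a = i
        · exact hai ▸ hi
        · exact hfree a (Finset.mem_erase.2 ⟨hai, ha⟩)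
      rw [if_neg hi, firstHitFlow, if_neg fun h => hi h.1, zero_add, Finset.mul_sum]
      refine Finset.sum_congr rfl fun k hk => ?_
      rw [ih k hk (hfree_child k hk), M.pi_child hk]
      ring

lemma sum_firstHitFlow {d : S → ℝ}
    (hd : ∀ i, d i = if i ∈ B then 1 else ∑ k ∈ M.child i, M.p k * d k) :
    ∑ j, M.firstHitFlow lam B j = lam * d M.r := by
  have := M.sum_subt_firstHitFlow lam B hd M.r (by simp [anc_root])
  rwa [subt_root, pi_root, mul_one] at this

end FirstHit

section Construction

variable {c : S → ℝ} {V : ℝ → S → ℝ} {lam mu γ : ℝ}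

def slackFlows (c : S → ℝ) (V : ℝ → S → ℝ) (lam γ : ℝ) : Set (S → ℝ) :=
  {ν | (∀ i, 0 ≤ ν i) ∧ (∀ i, M.served ν i ≤ lam * M.pi i) ∧
    (∀ i, γ < c i + M.Vf V γ i → M.served ν i = lam * M.pi i) ∧
    ∀ i, c i + M.Vf V γ i < γ → ν i = 0}

lemma convex_slackFlows : Convex ℝ (M.slackFlows c V lam γ) := by
  rintro ν ⟨h0, h1, h2, h3⟩ ν' ⟨h0', h1', h2', h3'⟩ a b ha hb hab
  have hserved : ∀ i, M.served (a • ν + b • ν') i = a * M.served ν i + b * M.served ν' i := by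
    intro i
    simp only [served, Pi.add_apply, Pi.smul_apply, smul_eq_mul, Finset.mul_sum,
      ← Finset.sum_add_distrib]
    exact Finset.sum_congr rfl fun _ _ => by ring
  have hcomb : ∀ x : ℝ, a * x + b * x = x := fun x => by rw [← add_mul, hab, one_mul]
  refine ⟨fun i => ?_, fun i => ?_, fun i hi => ?_, fun i hi => ?_⟩
  · exact add_nonneg (mul_nonneg ha (h0 i)) (mul_nonneg hb (h0' i))
  · rw [hserved, ← hcomb (lam * M.pi i)]
    exact add_le_add (mul_le_mul_of_nonneg_left (h1 i) ha) (mul_le_mul_of_nonneg_left (h1' i) hb)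
  · rw [hserved, h2 i hi, h2' i hi, hcomb]
  · simp [h3 i hi, h3' i hi]

/-- A tie `γ = c i + V^f(γ, i)` is broken towards buying exactly when buying realizes the slope. -/
def buySet (sel : ℝ → ℝ → ℝ) (c : S → ℝ) (V : ℝ → S → ℝ) (γ : ℝ) : Set S :=
  {i | γ ≤ c i + M.Vf V γ i ∧ M.slope sel c V γ i = 1}

lemma slope_eq_ite_buySet {sel : ℝ → ℝ → ℝ} (hsel : ∀ x y, sel x y = x ∨ sel x y = y) (i : S) :
    M.slope sel c V γ i =
      if i ∈ M.buySet sel c V γ then 1 else ∑ k ∈ M.child i, M.p k * M.slope sel c V γ k := by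
  by_cases hi : i ∈ M.buySet sel c V γ
  · rw [if_pos hi, hi.2]
  · rw [if_neg hi]
    replace hi : γ ≤ c i + M.Vf V γ i → M.slope sel c V γ i ≠ 1 := fun h h1 => hi ⟨h, h1⟩
    rcases lt_trichotomy γ (c i + M.Vf V γ i) with h | h | h
    · exact absurd (by rw [M.slope_eq, if_pos h]) (hi h.le)
    · have hslope := M.slope_eq sel (c := c) (V := V) γ i
      rw [if_neg h.not_lt, if_neg h.symm.not_lt] at hslope
      rcases hsel 1 (∑ k ∈ M.child i, M.p k * M.slope sel c V γ k) with h' | h'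
      · exact absurd (hslope.trans h') (hi h.le)
      · exact hslope.trans h'
    · rw [M.slope_eq, if_neg (lt_asymm h), if_pos h]

lemma firstHitFlow_buySet_mem_slackFlows (hlam : 0 ≤ lam) (sel : ℝ → ℝ → ℝ) :
    M.firstHitFlow lam (M.buySet sel c V γ) ∈ M.slackFlows c V lam γ := by
  refine ⟨M.firstHitFlow_nonneg _ hlam, fun i => ?_, fun i hi => ?_, fun i hi => ?_⟩
  · rw [served_firstHitFlow]
    split_ifs
    exacts [le_rfl, mul_nonneg hlam (M.pi_pos i).le]
  · have hiB : i ∈ M.buySet sel c V γ := ⟨hi.le, by rw [M.slope_eq, if_pos hi]⟩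
    rw [served_firstHitFlow, if_pos ⟨i, M.self_mem_anc i, hiB⟩]
  · rw [firstHitFlow, if_neg]
    exact fun h => (not_le.2 hi) h.1.1

lemma sum_firstHitFlow_buySet {sel : ℝ → ℝ → ℝ} (hsel : ∀ x y, sel x y = x ∨ sel x y = y) :
    ∑ i, M.firstHitFlow lam (M.buySet sel c V γ) i = lam * M.slope sel c V γ M.r :=
  M.sum_firstHitFlow lam _ (M.slope_eq_ite_buySet hsel)

theorem exists_simpFeasible_compSlack (hV : M.IsSkiValue c V) (hlam : 0 ≤ lam) (hγ : 0 ≤ γ)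
    (hmin : IsMinOn (fun g => mu * g - lam * V g M.r) (Set.Ici 0) γ) :
    ∃ ν, M.SimpFeasible lam mu ν ∧ M.CompSlack c V lam mu γ ν := by
  suffices ∃ ν ∈ M.slackFlows c V lam γ, ∑ i, ν i ≤ mu ∧ (0 < γ → ∑ i, ν i = mu) by
    obtain ⟨ν, ⟨h0, h1, h2, h3⟩, hsum, hC1⟩ := this
    exact ⟨ν, ⟨h0, h1, hsum⟩, hC1, h2, h3⟩
  set νlo := M.firstHitFlow lam (M.buySet min c V γ)
  set νhi := M.firstHitFlow lam (M.buySet max c V γ)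
  have hlo : ∑ i, νlo i ≤ mu := by
    rw [M.sum_firstHitFlow_buySet min_choice]
    exact M.lam_mul_slope_min_le hV hγ hmin
  rcases hγ.eq_or_lt with rfl | hγ
  · exact ⟨νlo, M.firstHitFlow_buySet_mem_slackFlows hlam min, hlo, fun h => (lt_irrefl 0 h).elim⟩
  have hhi : mu ≤ ∑ i, νhi i := by
    rw [M.sum_firstHitFlow_buySet max_choice]
    exact M.le_lam_mul_slope_max hV hγ hmin
  obtain ⟨a, b, ha, hb, hab, hmu⟩ : mu ∈ segment ℝ (∑ i, νlo i) (∑ i, νhi i) := by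
    rw [segment_eq_Icc (hlo.trans hhi)]
    exact ⟨hlo, hhi⟩
  have hsum : ∑ i, (a • νlo + b • νhi) i = mu := by
    simp only [Pi.add_apply, Pi.smul_apply, smul_eq_mul, Finset.sum_add_distrib, ← Finset.mul_sum]
    exact hmu
  refine ⟨a • νlo + b • νhi, M.convex_slackFlows (M.firstHitFlow_buySet_mem_slackFlows hlam min)
    (M.firstHitFlow_buySet_mem_slackFlows hlam max) ha hb hab, hsum.le, fun _ => hsum⟩

end Construction

end TreeMC

theorem simplerFluid_opt_iff_comp_slack_general {S : Type*} [Fintype S] [DecidableEq S]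
    (M : TreeMC S) (c : S → ℝ)
    (V : ℝ → S → ℝ) (hV : M.IsSkiValue c V)
    (lam mu : ℝ) (hlam0 : 0 < lam)
    (γstar : ℝ) (hγ0 : 0 ≤ γstar)
    (hγmin : ∀ γ : ℝ, 0 ≤ γ →
      mu * γstar - lam * V γstar M.r ≤ mu * γ - lam * V γ M.r)
    (ν : S → ℝ) (hν : M.SimpFeasible lam mu ν) :
    (∀ ν' : S → ℝ, M.SimpFeasible lam mu ν' →
        ∑ a : S, ν' a * M.cf c a ≤ ∑ a : S, ν a * M.cf c a) ↔
      ((0 < γstar → ∑ i : S, ν i = mu) ∧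
        (∀ i : S, γstar < c i + M.Vf V γstar i →
          ν i = lam * M.pi i - ∑ a ∈ (M.anc i).erase i, ν a * M.pi i / M.pi a) ∧
        (∀ i : S, c i + M.Vf V γstar i < γstar → ν i = 0)) := by
  obtain ⟨ν₀, hν₀, hslack₀⟩ :=
    M.exists_simpFeasible_compSlack hV hlam0.le hγ0 (isMinOn_iff.2 hγmin)
  have hν₀opt := (M.objective_eq_dualValue_iff hV hγ0 hν₀).2 hslack₀
  calc (∀ ν', M.SimpFeasible lam mu ν' → ∑ a, ν' a * M.cf c a ≤ ∑ a, ν a * M.cf c a)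
      ↔ ∑ a, ν a * M.cf c a = M.dualValue c V lam mu γstar :=
        ⟨fun h => le_antisymm (M.objective_le_dualValue hV hγ0 hν) (hν₀opt ▸ h ν₀ hν₀),
          fun h ν' hν' => h ▸ M.objective_le_dualValue hV hγ0 hν'⟩
    _ ↔ M.CompSlack c V lam mu γstar ν := M.objective_eq_dualValue_iff hV hγ0 hν
    _ ↔ _ := by simp only [TreeMC.CompSlack, TreeMC.served_eq_add_sum_erase, eq_sub_iff_add_eq]

/-- Complementary slackness. Let `γ*` minimize `γ ↦ μ·γ − λ·V(γ, r)` over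
`γ ≥ 0` and, for `ν`, define `q_i(ν) = λ·π(i) − Σ_{a ∈ anc(i), a ≠ i} ν_a·π(i)/π(a)`.
A vector `ν` feasible for SimplerFluid is optimal for SimplerFluid iff
(C-1) `Σ_i ν_i = μ` whenever `γ* > 0`;
(C-2) `ν_i = q_i(ν)` for every `i` with `c(i) + V^f(γ*, i) > γ*`;
(C-3) `ν_i = 0` for every `i` with `c(i) + V^f(γ*, i) < γ*`. -/
theorem simplerFluid_opt_iff_comp_slack {S : Type*} [Fintype S] [DecidableEq S]
    (M : TreeMC S) (c : S → ℝ) (hc : ∀ i, 0 < c i)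
    (V : ℝ → S → ℝ) (hV : M.IsSkiValue c V)
    (lam mu : ℝ) (hlam0 : 0 < lam) (hlam1 : lam < 1) (hmu0 : 0 < mu) (hmu1 : mu ≤ 1)
    (γstar : ℝ) (hγ0 : 0 ≤ γstar)
    (hγmin : ∀ γ : ℝ, 0 ≤ γ →
      mu * γstar - lam * V γstar M.r ≤ mu * γ - lam * V γ M.r)
    (ν : S → ℝ) (hν : M.SimpFeasible lam mu ν) :
    (∀ ν' : S → ℝ, M.SimpFeasible lam mu ν' →
        ∑ a : S, ν' a * M.cf c a ≤ ∑ a : S, ν a * M.cf c a) ↔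
      ((0 < γstar → ∑ i : S, ν i = mu) ∧
        (∀ i : S, γstar < c i + M.Vf V γstar i →
          ν i = lam * M.pi i - ∑ a ∈ (M.anc i).erase i, ν a * M.pi i / M.pi a) ∧
        (∀ i : S, c i + M.Vf V γstar i < γstar → ν i = 0)) :=
  simplerFluid_opt_iff_comp_slack_general M c V hV lam mu hlam0 γstar hγ0 hγmin ν hν
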